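/- arXiv:1006.1567 — 3 statements merged into one kernel-verified Lean document; each statement's English description precedes it below -/
import Mathlib

section
/- Let g(x) = arccos(x) - x·√(1-x²). Then ∫₀¹ g(u)² · √(1-u²) du = π³/48. -/
open Real Set intervalIntegral

theorem hasDerivAt_arccos_sub_mul_sqrt {x : ℝ} (h₁ : -1 < x) (h₂ : x < 1) :
    HasDerivAt (fun x => arccos x - x * √(1 - x ^ 2)) (-2 * √(1 - x ^ 2)) x := by
  have hpos : 0 < 1 - x ^ 2 := by nlinarith
  have hsqrt : HasDerivAt (fun x : ℝ => √(1 - x ^ 2)) (-x / √(1 - x ^ 2)) x := by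
    convert ((hasDerivAt_pow 2 x).const_sub 1).sqrt hpos.ne' using 1
    field_simp
    norm_num [mul_comm]
  refine ((hasDerivAt_arccos h₁.ne' h₂.ne).sub ((hasDerivAt_id' x).mul hsqrt)).congr_deriv ?_
  have hne : √(1 - x ^ 2) ≠ 0 := (sqrt_pos.2 hpos).ne'
  field_simp
  rw [sq_sqrt hpos.le]
  linarith

theorem continuous_arccos_sub_mul_sqrt :
    Continuous fun x => arccos x - x * √(1 - x ^ 2) := by
  fun_prop

theorem integral_g_sq_mul_sqrt
    (g : ℝ → ℝ) (hg : ∀ x, g x = Real.arccos x - x * Real.sqrt (1 - x ^ 2)) :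
    ∫ u in (0:ℝ)..1, (g u) ^ 2 * Real.sqrt (1 - u ^ 2) = Real.pi ^ 3 / 48 := by
  have hg_eq : g = fun x => arccos x - x * √(1 - x ^ 2) := funext hg
  have hg_deriv : ∀ x ∈ Ioo (min 0 1) (max 0 1),
      HasDerivWithinAt g (-2 * √(1 - x ^ 2)) (Ioi x) x := fun x hx => by
    rw [min_eq_left zero_le_one, max_eq_right zero_le_one] at hx
    exact hg_eq ▸ (hasDerivAt_arccos_sub_mul_sqrt (by linarith [hx.1]) hx.2).hasDerivWithinAt
  -- Since `g' = -2 √(1 - u²)`, substituting `v = g u` turns the integral into `-½ ∫ v²`.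
  have hsubst : ∫ u in (0:ℝ)..1, -2 * (g u ^ 2 * √(1 - u ^ 2)) = ∫ v in g 0..g 1, v ^ 2 := by
    convert integral_comp_mul_deriv'' (g := fun v => v ^ 2)
      (hg_eq ▸ continuous_arccos_sub_mul_sqrt.continuousOn) hg_deriv (by fun_prop) (by fun_prop)
      using 3 with u
    dsimp only [Function.comp_apply]
    ring
  have hg0 : g 0 = π / 2 := by simp [hg]
  have hg1 : g 1 = 0 := by simp [hg]
  rw [hg0, hg1, integral_pow, integral_const_mul] at hsubst
  push_cast at hsubst
  linear_combination (-1 / 2 : ℝ) * hsubst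
end

section
/- Let g(x) = arccos(x) - x·√(1-x²) and G(x) = x·arccos(x) - √(1-x²) + (1/3)(1-x²)^(3/2) + 2/3. Then ∫₀¹ g(u)·G(√(1-u²)) du = π³/96 - 5π/48 + 4/9. -/
/-! On `[0, 1]` we have `arccos √(1 - u²) = π/2 - arccos u` and `√(1 - (1 - u²)) = u`, so the
integrand is a polynomial in `u`, `arccos u`, `√(1 - u²)` and `π`. Such an expression has an
elementary primitive, which is checked by differentiating with `arccos' = -1/√(1 - u²)`,
`(√(1 - u²))' = -u/√(1 - u²)` and `√(1 - u²)² = 1 - u²`. -/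

open Real Set

theorem arccos_sqrt_one_sub_sq {x : ℝ} (hx : 0 ≤ x) : arccos √(1 - x ^ 2) = π / 2 - arccos x := by
  rw [← arcsin_eq_arccos hx, arcsin_eq_pi_div_two_sub_arccos]

theorem one_sub_sqrt_one_sub_sq_sq {x : ℝ} (hx : x ^ 2 ≤ 1) : 1 - √(1 - x ^ 2) ^ 2 = x ^ 2 := by
  rw [sq_sqrt (by linarith)]
  ring

theorem hasDerivAt_sqrt_one_sub_sq {x : ℝ} (hx : x ^ 2 < 1) :
    HasDerivAt (fun u : ℝ => √(1 - u ^ 2)) (-x / √(1 - x ^ 2)) x := by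
  convert ((hasDerivAt_pow 2 x).const_sub 1).sqrt (by linarith) using 1
  field_simp
  ring

noncomputable def primitiveGMulGSqrt (u : ℝ) : ℝ :=
  arccos u ^ 3 / 6 - π / 8 * arccos u ^ 2
    + arccos u * √(1 - u ^ 2) * u * (π / 4 - arccos u / 2)
    + arccos u * (5 / 24 + 2 / 3 * u - 1 / 2 * u ^ 2 - 1 / 6 * u ^ 4)
    + π / 8 * (u ^ 4 - u ^ 2)
    + √(1 - u ^ 2) * (-(4 / 9) + 5 / 24 * u - 2 / 9 * u ^ 2 + 11 / 36 * u ^ 3 - 1 / 18 * u ^ 5)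

theorem continuous_primitiveGMulGSqrt : Continuous primitiveGMulGSqrt := by
  unfold primitiveGMulGSqrt
  fun_prop

theorem hasDerivAt_primitiveGMulGSqrt {x : ℝ} (hx : x ∈ Ioo (-1 : ℝ) 1) :
    HasDerivAt primitiveGMulGSqrt ((arccos x - x * √(1 - x ^ 2)) *
      (√(1 - x ^ 2) * (π / 2 - arccos x) - x + x ^ 3 / 3 + 2 / 3)) x := by
  have hx2 : x ^ 2 < 1 := by nlinarith [hx.1, hx.2]
  have ha := hasDerivAt_arccos hx.1.ne' hx.2.ne
  have hs := hasDerivAt_sqrt_one_sub_sq hx2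
  have hid := hasDerivAt_id' x
  have hP := (((hid.const_mul (2 / 3)).const_add (5 / 24)).sub
    ((hid.pow 2).const_mul (1 / 2))).sub ((hid.pow 4).const_mul (1 / 6))
  have hQ := ((((hid.const_mul (5 / 24)).const_add (-(4 / 9))).sub
    ((hid.pow 2).const_mul (2 / 9))).add ((hid.pow 3).const_mul (11 / 36))).sub
    ((hid.pow 5).const_mul (1 / 18))
  have H := ((((((ha.pow 3).div_const 6).sub ((ha.pow 2).const_mul (π / 8))).add
    (((ha.mul hs).mul hid).mul ((ha.div_const 2).const_sub (π / 4)))).add (ha.mul hP)).add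
    (((hid.pow 4).sub (hid.pow 2)).const_mul (π / 8))).add (hs.mul hQ)
  refine HasDerivAt.congr_deriv (f := primitiveGMulGSqrt) H ?_
  have hs0 : √(1 - x ^ 2) ≠ 0 := (sqrt_pos.2 (by linarith)).ne'
  have hs2 : √(1 - x ^ 2) ^ 2 = 1 - x ^ 2 := sq_sqrt (by linarith)
  have hs3 : √(1 - x ^ 2) ^ 3 = (1 - x ^ 2) * √(1 - x ^ 2) := by rw [pow_succ, hs2]
  simp only [Pi.mul_apply, Pi.sub_apply, Pi.add_apply, Pi.pow_apply]
  push_cast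
  field_simp
  ring_nf
  simp only [hs2, hs3]
  ring

theorem primitiveGMulGSqrt_one : primitiveGMulGSqrt 1 = 0 := by
  simp [primitiveGMulGSqrt]

theorem primitiveGMulGSqrt_zero :
    primitiveGMulGSqrt 0 = -(π ^ 3 / 96) + 5 * π / 48 - 4 / 9 := by
  simp only [primitiveGMulGSqrt, arccos_zero]
  norm_num
  ring

theorem integral_g_mul_G_sqrt
    (g : ℝ → ℝ) (hg : ∀ x, g x = Real.arccos x - x * Real.sqrt (1 - x ^ 2))
    (G : ℝ → ℝ) (hG : ∀ x, G x = x * Real.arccos x - Real.sqrt (1 - x ^ 2)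
        + (1 / 3) * (1 - x ^ 2) ^ ((3:ℝ) / 2) + 2 / 3) :
    ∫ u in (0:ℝ)..1, g u * G (Real.sqrt (1 - u ^ 2)) =
      Real.pi ^ 3 / 96 - 5 * Real.pi / 48 + 4 / 9 := by
  have hintegrand : EqOn (fun u => g u * G √(1 - u ^ 2)) (fun u => (arccos u - u * √(1 - u ^ 2)) *
      (√(1 - u ^ 2) * (π / 2 - arccos u) - u + u ^ 3 / 3 + 2 / 3)) (uIcc 0 1) := by
    intro u hu
    rw [uIcc_of_le zero_le_one] at hu
    have hu2 : u ^ 2 ≤ 1 := by nlinarith [hu.1, hu.2]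
    have hu3 : (u ^ 2) ^ ((3 : ℝ) / 2) = u ^ 3 := by
      rw [← rpow_natCast u 2, ← rpow_mul hu.1]
      norm_num
    simp only [hg, hG, arccos_sqrt_one_sub_sq hu.1, one_sub_sqrt_one_sub_sq_sq hu2, sqrt_sq hu.1,
      hu3]
    ring
  rw [intervalIntegral.integral_congr hintegrand,
    intervalIntegral.integral_eq_sub_of_hasDerivAt_of_le zero_le_one
      continuous_primitiveGMulGSqrt.continuousOn
      (fun x hx => hasDerivAt_primitiveGMulGSqrt (Ioo_subset_Ioo_left (by norm_num) hx))
      (by apply Continuous.intervalIntegrable; fun_prop),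
    primitiveGMulGSqrt_one, primitiveGMulGSqrt_zero]
  ring
end

section
/- Let 0 < r and A = [0,n]² with n > 2r. If ξ ∈ A is at distance x₁·r from one edge of A (with 0 ≤ x₁ ≤ 1) and at distance greater than r from the other three edges, then the area of B(ξ,r) ∩ A equals r²·(π - g(x₁)), where g(x) = arccos(x) - x√(1-x²). -/
/-!
The three far edges of the square do not meet the disc, so `B(ξ,r) ∩ A` is the disc cut by the
half-plane `y₀ ≤ ξ₀ + x₁ r`. Slicing by vertical lines, its area is
`∫_{-r}^{x₁ r} 2√(r² - x²) dx = r² (π/2 + arcsin x₁ + x₁ √(1 - x₁²))`,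
which is `r² (π - g x₁)` since `arccos = π/2 - arcsin`.
-/

open MeasureTheory Set Real

theorem hasDerivAt_arcsin_add_mul_sqrt_one_sub_sq {x : ℝ} (hx : x ∈ Ioo (-1 : ℝ) 1) :
    HasDerivAt (fun x => arcsin x + x * √(1 - x ^ 2)) (2 * √(1 - x ^ 2)) x := by
  have hpos : 0 < 1 - x ^ 2 := by nlinarith [hx.1, hx.2]
  have hsqrt := ((hasDerivAt_pow 2 x).const_sub 1).sqrt hpos.ne'
  refine ((hasDerivAt_arcsin hx.1.ne' hx.2.ne).fun_add
    ((hasDerivAt_id' x).fun_mul hsqrt)).congr_deriv ?_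
  field_simp
  rw [sq_sqrt hpos.le]
  ring

theorem integral_two_mul_sqrt_one_sub_sq {t : ℝ} (ht : t ∈ Icc (-1 : ℝ) 1) :
    ∫ x in (-1)..t, 2 * √(1 - x ^ 2) = π / 2 + arcsin t + t * √(1 - t ^ 2) := by
  rw [intervalIntegral.integral_eq_sub_of_hasDerivAt_of_le ht.1 (by fun_prop)
    (fun x hx => hasDerivAt_arcsin_add_mul_sqrt_one_sub_sq ⟨hx.1, hx.2.trans_le ht.2⟩)
    (by apply Continuous.intervalIntegrable; fun_prop)]
  simp only [arcsin_neg_one, neg_one_sq, sub_self, sqrt_zero, mul_zero, add_zero]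
  ring

theorem integral_two_mul_sqrt_sq_sub_sq {a r t : ℝ} (hr : 0 < r) (ht : t ∈ Icc (-1 : ℝ) 1) :
    ∫ x in (a - r)..(a + t * r), 2 * √(r ^ 2 - (x - a) ^ 2) =
      r ^ 2 * (π / 2 + arcsin t + t * √(1 - t ^ 2)) := by
  have hscale (x : ℝ) : 2 * √(r ^ 2 - x ^ 2) = r * (2 * √(1 - (x / r) ^ 2)) := by
    rw [show r ^ 2 - x ^ 2 = r ^ 2 * (1 - (x / r) ^ 2) by field_simp, sqrt_mul (sq_nonneg r),
      sqrt_sq hr.le]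
    ring
  rw [intervalIntegral.integral_comp_sub_right (fun x => 2 * √(r ^ 2 - x ^ 2)) a]
  simp_rw [hscale]
  rw [intervalIntegral.integral_const_mul,
    intervalIntegral.integral_comp_div (fun x => 2 * √(1 - x ^ 2)) hr.ne']
  rw [show (a - r - a) / r = -1 by field_simp; ring,
    show (a + t * r - a) / r = t by field_simp; ring, integral_two_mul_sqrt_one_sub_sq ht,
    smul_eq_mul]
  ring

theorem volume_disc_slice (a b r x : ℝ) :
    volume {y : ℝ | (x - a) ^ 2 + (y - b) ^ 2 ≤ r ^ 2} =
      ENNReal.ofReal (2 * √(r ^ 2 - (x - a) ^ 2)) := by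
  by_cases hx : (x - a) ^ 2 ≤ r ^ 2
  · have hslice : {y : ℝ | (x - a) ^ 2 + (y - b) ^ 2 ≤ r ^ 2} =
        Icc (b - √(r ^ 2 - (x - a) ^ 2)) (b + √(r ^ 2 - (x - a) ^ 2)) := by
      ext y
      simp only [mem_ofPred_eq, mem_Icc, ← le_sub_iff_add_le', Real.sq_le (sub_nonneg.2 hx)]
      constructor <;> rintro ⟨h₁, h₂⟩ <;> constructor <;> linarith
    rw [hslice, volume_Icc]
    ring_nf
  · have hempty : {y : ℝ | (x - a) ^ 2 + (y - b) ^ 2 ≤ r ^ 2} = ∅ :=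
      eq_empty_of_forall_notMem fun y hy => hx (by nlinarith [sq_nonneg (y - b), hy.out])
    rw [hempty, measure_empty, sqrt_eq_zero'.2 (by linarith), mul_zero, ENNReal.ofReal_zero]

theorem measurableSet_disc_inter_halfPlane (a b r c : ℝ) :
    MeasurableSet {p : ℝ × ℝ | (p.1 - a) ^ 2 + (p.2 - b) ^ 2 ≤ r ^ 2 ∧ p.1 ≤ c} := by
  measurability

theorem volume_disc_inter_halfPlane {a b r t : ℝ} (hr : 0 < r) (ht : t ∈ Icc (-1 : ℝ) 1) :
    volume {p : ℝ × ℝ | (p.1 - a) ^ 2 + (p.2 - b) ^ 2 ≤ r ^ 2 ∧ p.1 ≤ a + t * r} =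
      ENNReal.ofReal (r ^ 2 * (π / 2 + arcsin t + t * √(1 - t ^ 2))) := by
  set c := a + t * r
  have hc : a - r ≤ c := by nlinarith [ht.1]
  have hslices : (fun x => volume (Prod.mk x ⁻¹'
      {p : ℝ × ℝ | (p.1 - a) ^ 2 + (p.2 - b) ^ 2 ≤ r ^ 2 ∧ p.1 ≤ c})) =
      (Icc (a - r) c).indicator (fun x => ENNReal.ofReal (2 * √(r ^ 2 - (x - a) ^ 2))) := by
    ext x
    by_cases hxc : x ≤ c
    · by_cases hxa : a - r ≤ x
      · simp [preimage, hxc, hxa, volume_disc_slice]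
      · have : r ^ 2 - (x - a) ^ 2 ≤ 0 := by nlinarith
        simp [preimage, hxc, hxa, volume_disc_slice, sqrt_eq_zero'.2 this]
    · simp [preimage, hxc]
  rw [Measure.volume_eq_prod, Measure.prod_apply (measurableSet_disc_inter_halfPlane a b r c),
    hslices, lintegral_indicator measurableSet_Icc,
    ← ofReal_integral_eq_lintegral_ofReal (Continuous.integrableOn_Icc (by fun_prop))
      (.of_forall fun x => by positivity),
    integral_Icc_eq_integral_Ioc, ← intervalIntegral.integral_of_le hc,
    integral_two_mul_sqrt_sq_sub_sq hr ht]

theorem EuclideanSpace.volume_preimage_fin_two {S : Set (ℝ × ℝ)} (hS : MeasurableSet S) :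
    volume {y : EuclideanSpace ℝ (Fin 2) | (y 0, y 1) ∈ S} = volume S :=
  ((volume_preserving_finTwoArrow ℝ).comp
    (EuclideanSpace.volume_preserving_symm_measurableEquiv_toLp (Fin 2))).measure_preimage
    hS.nullMeasurableSet

theorem EuclideanSpace.dist_le_iff_fin_two {y ξ : EuclideanSpace ℝ (Fin 2)} {r : ℝ}
    (hr : 0 ≤ r) :
    dist y ξ ≤ r ↔ (y 0 - ξ 0) ^ 2 + (y 1 - ξ 1) ^ 2 ≤ r ^ 2 := by
  rw [EuclideanSpace.dist_eq, sqrt_le_left hr, Fin.sum_univ_two, Real.dist_eq, Real.dist_eq,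
    sq_abs, sq_abs]

theorem closedBall_inter_square_eq_disc_inter_halfPlane {n r : ℝ} (hr : 0 ≤ r)
    {ξ : EuclideanSpace ℝ (Fin 2)} (hξ0 : r < ξ 0) (hξ1 : r < ξ 1) (hξ1' : ξ 1 < n - r) :
    Metric.closedBall ξ r ∩ {y | ∀ i, y i ∈ Icc 0 n} =
      {y | (y 0, y 1) ∈
        {p : ℝ × ℝ | (p.1 - ξ 0) ^ 2 + (p.2 - ξ 1) ^ 2 ≤ r ^ 2 ∧ p.1 ≤ n}} := by
  ext y
  simp only [mem_inter_iff, Metric.mem_closedBall, EuclideanSpace.dist_le_iff_fin_two hr,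
    mem_ofPred_eq, Fin.forall_fin_two, mem_Icc]
  constructor
  · rintro ⟨hy, ⟨-, h0n⟩, -⟩
    exact ⟨hy, h0n⟩
  · rintro ⟨hy, h0n⟩
    refine ⟨hy, ⟨?_, h0n⟩, ?_, ?_⟩ <;>
      nlinarith [sq_nonneg (y 0 - ξ 0), sq_nonneg (y 1 - ξ 1)]

theorem area_ball_inter_square_general
    (g : ℝ → ℝ) (hg : ∀ x, g x = Real.arccos x - x * Real.sqrt (1 - x ^ 2))
    (n r x₁ : ℝ) (hr : 0 < r)
    (hx₁ : x₁ ∈ Set.Icc (0:ℝ) 1)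
    (ξ : EuclideanSpace ℝ (Fin 2))
    (hξ0 : ξ 0 = n - x₁ * r)
    (hξ0' : r < ξ 0)
    (hξ1 : r < ξ 1) (hξ1' : ξ 1 < n - r) :
    (volume (Metric.closedBall ξ r ∩ {y : EuclideanSpace ℝ (Fin 2) |
        ∀ i, y i ∈ Set.Icc (0:ℝ) n})).toReal = r ^ 2 * (Real.pi - g x₁) := by
  obtain ⟨hx₁0, hx₁1⟩ := hx₁
  have hn : n = ξ 0 + x₁ * r := by linarith
  have hsegment_nonneg : 0 ≤ π / 2 + arcsin x₁ + x₁ * √(1 - x₁ ^ 2) := by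
    nlinarith [neg_pi_div_two_le_arcsin x₁, mul_nonneg hx₁0 (sqrt_nonneg (1 - x₁ ^ 2))]
  rw [closedBall_inter_square_eq_disc_inter_halfPlane hr.le hξ0' hξ1 hξ1',
    EuclideanSpace.volume_preimage_fin_two (measurableSet_disc_inter_halfPlane _ _ _ _), hn,
    volume_disc_inter_halfPlane hr ⟨by linarith, hx₁1⟩,
    ENNReal.toReal_ofReal (mul_nonneg (sq_nonneg r) hsegment_nonneg), hg, arccos]
  ring

theorem area_ball_inter_square
    (g : ℝ → ℝ) (hg : ∀ x, g x = Real.arccos x - x * Real.sqrt (1 - x ^ 2))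
    (n r x₁ : ℝ) (hr : 0 < r) (hn : 2 * r < n)
    (hx₁ : x₁ ∈ Set.Icc (0:ℝ) 1)
    (ξ : EuclideanSpace ℝ (Fin 2))
    (hξ0 : ξ 0 = n - x₁ * r)
    (hξ0' : r < ξ 0)
    (hξ1 : r < ξ 1) (hξ1' : ξ 1 < n - r) :
    (volume (Metric.closedBall ξ r ∩ {y : EuclideanSpace ℝ (Fin 2) |
        ∀ i, y i ∈ Set.Icc (0:ℝ) n})).toReal = r ^ 2 * (Real.pi - g x₁) :=
  area_ball_inter_square_general g hg n r x₁ hr hx₁ ξ hξ0 hξ0' hξ1 hξ1'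
end
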